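/- arXiv:2602.21122 — 3 statements merged into one kernel-verified Lean document; each statement's English description precedes it below -/
import Mathlib

section
/- For all real numbers λ1111, λ1112, λ1122, λ1222, λ2222 there exists θ0 ∈ [0, 2π) such that f(θ0) = 0, where f(θ) = (1/2)(cos 2θ + cos 4θ)·λ1112 + 4 cos³θ sin θ·λ1111 − 4 cos θ sin³θ·λ2222 + sin θ sin 3θ·λ1222 − (1/2) sin 4θ·λ1122. -/
/-!
The rotated coupling is a trigonometric polynomial in `2θ` and `4θ` without constant
term. Its `2θ`-part changes sign under `θ ↦ θ + π/2` and its `4θ`-part under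
`θ ↦ θ + π/4`, so its values at `0, π/4, π/2, 3π/4` sum to zero (a discrete form of
`∫₀^{2π} f = 0`). One of these values is then `≤ 0` and one `≥ 0`, and the intermediate
value theorem gives a zero.
-/

open Real Finset Function

theorem IsPreconnected.exists_eq_zero_of_sum_eq_zero {α β ι : Type*} [LinearOrder α]
    [TopologicalSpace α] [OrderClosedTopology α] [AddCommMonoid α]
    [IsOrderedCancelAddMonoid α] [TopologicalSpace β] {s : Set β} (hs : IsPreconnected s)
    {f : β → α} (hf : ContinuousOn f s) {t : Finset ι} (ht : t.Nonempty) {p : ι → β}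
    (hp : ∀ i ∈ t, p i ∈ s) (hsum : ∑ i ∈ t, f (p i) = 0) : ∃ x ∈ s, f x = 0 := by
  obtain ⟨i, hi, hfi⟩ :=
    exists_le_of_sum_le (f := fun i ↦ f (p i)) (g := 0) ht (by simp [hsum])
  obtain ⟨j, hj, hfj⟩ :=
    exists_le_of_sum_le (f := 0) (g := fun i ↦ f (p i)) ht (by simp [hsum])
  exact hs.intermediate_value (hp i hi) (hp j hj) hf ⟨hfi, hfj⟩

theorem Function.Antiperiodic.sum_range_four_add_eq_zero {α β : Type*} [AddCommGroup α]
    [AddCommGroup β] {u v : α → β} {c : α} (hu : Antiperiodic u (2 • c))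
    (hv : Antiperiodic v c) (x : α) : ∑ k ∈ range 4, (u + v) (x + k • c) = 0 := by
  have hu₀ : u (x + 2 • c) = -u x := hu x
  have hu₁ : u (x + 3 • c) = -u (x + c) := by rw [← hu (x + c)]; congr 1; abel
  have hv₁ : v (x + c) = -v x := hv x
  have hv₃ : v (x + 3 • c) = -v (x + 2 • c) := by rw [← hv (x + 2 • c)]; congr 1; abel
  simp only [sum_range_succ, range_zero, sum_empty, Pi.add_apply, zero_smul, one_smul, add_zero,
    hu₀, hu₁, hv₁, hv₃]
  abel

theorem antiperiodic_harmonic {n : ℝ} (hn : n ≠ 0) (A B : ℝ) :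
    Antiperiodic (fun θ ↦ A * cos (n * θ) + B * sin (n * θ)) (π / n) := by
  intro θ
  simp only [mul_add, mul_div_cancel₀ π hn, cos_add_pi, sin_add_pi]
  ring

noncomputable def rotatedQuartic1112 (l1111 l1112 l1122 l1222 l2222 θ : ℝ) : ℝ :=
  (1/2) * (Real.cos (2 * θ) + Real.cos (4 * θ)) * l1112
    + 4 * (Real.cos θ)^3 * Real.sin θ * l1111
    - 4 * Real.cos θ * (Real.sin θ)^3 * l2222
    + Real.sin θ * Real.sin (3 * θ) * l1222
    - (1/2) * Real.sin (4 * θ) * l1122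

theorem rotatedQuartic1112_eq_harmonics (l1111 l1112 l1122 l1222 l2222 : ℝ) :
    rotatedQuartic1112 l1111 l1112 l1122 l1222 l2222 =
      (fun θ ↦ (l1112 + l1222) / 2 * cos (2 * θ) + (l1111 - l2222) * sin (2 * θ)) +
      (fun θ ↦
        (l1112 - l1222) / 2 * cos (4 * θ) + (l1111 + l2222 - l1122) / 2 * sin (4 * θ)) := by
  funext θ
  have h4 : (4 : ℝ) * θ = 2 * (2 * θ) := by ring
  have h3 : (3 : ℝ) * θ = 2 * θ + θ := by ring
  simp only [rotatedQuartic1112, Pi.add_apply, h4, h3, cos_two_mul, sin_two_mul, sin_add]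
  linear_combination
    (l1222 * (4 * cos θ ^ 2 - 1) - 4 * cos θ * sin θ * l2222) * sin_sq_add_cos_sq θ

/-- The quartic singlet coupling `λ̃1112` of the SM+2S scalar potential after an
`SO(2)` rotation of the two real singlets by angle `θ` (with `δ = +1`) can always
be rotated to zero: for all values of the quartic couplings there is
`θ0 ∈ [0, 2π)` at which it vanishes. -/
theorem stmt_0 (l1111 l1112 l1122 l1222 l2222 : ℝ) :
    ∃ θ0 ∈ Set.Ico (0 : ℝ) (2 * π),
      (1/2) * (Real.cos (2 * θ0) + Real.cos (4 * θ0)) * l1112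
        + 4 * (Real.cos θ0)^3 * Real.sin θ0 * l1111
        - 4 * Real.cos θ0 * (Real.sin θ0)^3 * l2222
        + Real.sin θ0 * Real.sin (3 * θ0) * l1222
        - (1/2) * Real.sin (4 * θ0) * l1122 = 0 := by
  set f := rotatedQuartic1112 l1111 l1112 l1122 l1222 l2222 with hf_def
  have hf : Continuous f := by unfold f rotatedQuartic1112; fun_prop
  have hsum : ∑ k ∈ range 4, f (0 + k • (π / 4)) = 0 := by
    rw [hf_def, rotatedQuartic1112_eq_harmonics]
    refine Antiperiodic.sum_range_four_add_eq_zero ?_ ?_ 0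
    · have hperiod : 2 • (π / 4) = π / 2 := by rw [two_nsmul]; ring
      rw [hperiod]
      exact antiperiodic_harmonic two_ne_zero _ _
    · exact antiperiodic_harmonic four_ne_zero _ _
  have hquarters : ∀ k ∈ range 4, 0 + k • (π / 4) ∈ Set.Icc 0 (3 * π / 4) := by
    intro k hk
    have hk3 : (k : ℝ) ≤ 3 := by exact_mod_cast Nat.le_of_lt_succ (mem_range.mp hk)
    rw [zero_add, nsmul_eq_mul]
    constructor <;> nlinarith [pi_pos]
  obtain ⟨θ0, hθ0, hzero⟩ :=
    isPreconnected_Icc.exists_eq_zero_of_sum_eq_zero hf.continuousOn ⟨0, by simp⟩ hquarters hsum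
  exact ⟨θ0, ⟨hθ0.1, hθ0.2.trans_lt (by linarith [pi_pos])⟩, hzero⟩
end

section
/- Let f(θ) = (1/2)(cos 2θ + cos 4θ)·λ1112 + 4 cos³θ sin θ·λ1111 − 4 cos θ sin³θ·λ2222 + sin θ sin 3θ·λ1222 − (1/2) sin 4θ·λ1122, where λ1111, λ1112, λ1122, λ1222, λ2222 are arbitrary real numbers. Then ∫₀^{2π} f(θ) dθ = 0. -/
open Real intervalIntegral

/-- The mean over a full period of the rotated quartic coupling `λ̃1112` of the
SM+2S scalar potential vanishes: `∫₀^{2π} f(θ) dθ = 0`. -/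
theorem stmt_1 (l1111 l1112 l1122 l1222 l2222 : ℝ) :
    ∫ θ in (0 : ℝ)..(2 * π),
      ((1/2) * (Real.cos (2 * θ) + Real.cos (4 * θ)) * l1112
        + 4 * (Real.cos θ)^3 * Real.sin θ * l1111
        - 4 * Real.cos θ * (Real.sin θ)^3 * l2222
        + Real.sin θ * Real.sin (3 * θ) * l1222
        - (1/2) * Real.sin (4 * θ) * l1122) = 0 := by
  set F : ℝ → ℝ := fun θ =>
    l1112 * (Real.sin (2*θ)/4 + Real.sin (4*θ)/8)
    - l1111 * (Real.cos θ)^4 - l2222 * (Real.sin θ)^4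
    + l1222 * (Real.sin (2*θ)/4 - Real.sin (4*θ)/8)
    + l1122 * Real.cos (4*θ) / 8 with hF
  have key : ∀ θ : ℝ, HasDerivAt F
      ((1/2) * (Real.cos (2 * θ) + Real.cos (4 * θ)) * l1112
        + 4 * (Real.cos θ)^3 * Real.sin θ * l1111
        - 4 * Real.cos θ * (Real.sin θ)^3 * l2222
        + Real.sin θ * Real.sin (3 * θ) * l1222
        - (1/2) * Real.sin (4 * θ) * l1122) θ := by
    intro θ
    have h2 : HasDerivAt (fun θ : ℝ => Real.sin (2*θ)) (2 * Real.cos (2*θ)) θ := by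
      simpa [Function.comp_def, mul_comm] using (Real.hasDerivAt_sin (2*θ)).comp θ ((hasDerivAt_id θ).const_mul 2)
    have h4 : HasDerivAt (fun θ : ℝ => Real.sin (4*θ)) (4 * Real.cos (4*θ)) θ := by
      simpa [Function.comp_def, mul_comm] using (Real.hasDerivAt_sin (4*θ)).comp θ ((hasDerivAt_id θ).const_mul 4)
    have hc4 : HasDerivAt (fun θ : ℝ => Real.cos (4*θ)) (-(4 * Real.sin (4*θ))) θ := by
      simpa [Function.comp_def, mul_comm] using (Real.hasDerivAt_cos (4*θ)).comp θ ((hasDerivAt_id θ).const_mul 4)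
    have hcp : HasDerivAt (fun θ : ℝ => (Real.cos θ)^4)
        (4 * (Real.cos θ)^3 * (-Real.sin θ)) θ := by
      simpa using ((Real.hasDerivAt_cos θ).fun_pow 4)
    have hsp : HasDerivAt (fun θ : ℝ => (Real.sin θ)^4)
        (4 * (Real.sin θ)^3 * Real.cos θ) θ := by
      simpa using ((Real.hasDerivAt_sin θ).fun_pow 4)
    have hd : HasDerivAt F
        (l1112 * ((2 * Real.cos (2*θ))/4 + (4 * Real.cos (4*θ))/8)
          - l1111 * (4 * (Real.cos θ)^3 * (-Real.sin θ))
          - l2222 * (4 * (Real.sin θ)^3 * Real.cos θ)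
          + l1222 * ((2 * Real.cos (2*θ))/4 - (4 * Real.cos (4*θ))/8)
          + l1122 * (-(4 * Real.sin (4*θ))) / 8) θ := by
      exact (((((h2.div_const 4).add (h4.div_const 8)).const_mul l1112).sub
        (hcp.const_mul l1111)).sub (hsp.const_mul l2222)).add
        (((h2.div_const 4).sub (h4.div_const 8)).const_mul l1222)
        |>.add ((hc4.const_mul l1122).div_const 8)
    convert hd using 1
    rw [Real.sin_three_mul, show (4:ℝ)*θ = 2*(2*θ) by ring, Real.cos_two_mul (2*θ),
      Real.cos_two_mul θ]
    have hs := Real.sin_sq_add_cos_sq θ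
    linear_combination (l1222 * (-4 * (Real.sin θ)^2 + 4 * (Real.cos θ)^2 - 1)) * hs
  have hint : IntervalIntegrable (fun θ : ℝ =>
      (1/2) * (Real.cos (2 * θ) + Real.cos (4 * θ)) * l1112
        + 4 * (Real.cos θ)^3 * Real.sin θ * l1111
        - 4 * Real.cos θ * (Real.sin θ)^3 * l2222
        + Real.sin θ * Real.sin (3 * θ) * l1222
        - (1/2) * Real.sin (4 * θ) * l1122) MeasureTheory.volume 0 (2*π) := by
    apply Continuous.intervalIntegrable
    fun_prop
  rw [intervalIntegral.integral_eq_sub_of_hasDerivAt (fun θ _ => key θ) hint]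
  have s2 : Real.sin (2 * (2*π)) = 0 := by
    rw [Real.sin_two_mul, Real.sin_two_pi]; ring
  have c2 : Real.cos (2 * (2*π)) = 1 := by
    rw [Real.cos_two_mul, Real.cos_two_pi]; ring
  have s4 : Real.sin (4 * (2*π)) = 0 := by
    rw [show (4:ℝ)*(2*π) = 2*(2*(2*π)) by ring, Real.sin_two_mul, s2]; ring
  have c4 : Real.cos (4 * (2*π)) = 1 := by
    rw [show (4:ℝ)*(2*π) = 2*(2*(2*π)) by ring, Real.cos_two_mul, c2]; ring
  simp [hF, s2, s4, c4, Real.cos_two_pi, Real.sin_two_pi]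
end

section
/- Let α1, α2, m11, m12, m22, κ111, κ112, κ122, κ222, λ1111, λ1112, λ1122, λ1222, λ2222, κ1, κ2, λ11, λ12, λ22 be real numbers and define P(s1, s2, h) = α1·s1 + α2·s2 − (m11·s1² + m12·s1·s2 + m22·s2²) + κ111·s1³ + κ112·s1²·s2 + κ122·s1·s2² + κ222·s2³ + λ1111·s1⁴ + λ1112·s1³·s2 + λ1122·s1²·s2² + λ1222·s1·s2³ + λ2222·s2⁴ + (κ1·s1 + κ2·s2)·h + (λ11·s1² + λ12·s1·s2 + λ22·s2²)·h. Then s2·∂P/∂s1 − s1·∂P/∂s2 = 0 for all real s1, s2, h if and only if α1 = α2 = 0, m12 = 0, m11 = m22, κ111 = κ112 = κ122 = κ222 = 0, λ1112 = λ1222 = 0, λ1111 = λ2222, λ1122 = 2·λ2222, κ1 = κ2 = 0, λ12 = 0, and λ11 = λ22. -/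
/-!
The generator maps the potential to a polynomial in `s1, s2, h` of degree at most four in the
singlets and at most one in `h`. Over an infinite domain a polynomial function vanishes
identically exactly when all its coefficients do, and the coefficient equations form a
triangular linear system whose solutions are the `SO(2)`-symmetric parameters.
-/

/-- The singlet-dependent part of the general renormalizable SM+2S scalar
potential, with `h = Φ†Φ` treated as an independent variable. -/
def sm2sPot (a1 a2 m11 m12 m22 k111 k112 k122 k222
    l1111 l1112 l1122 l1222 l2222 k1 k2 l11 l12 l22 : ℝ)
    (s1 s2 h : ℝ) : ℝ :=
  a1 * s1 + a2 * s2
    - (m11 * s1^2 + m12 * s1 * s2 + m22 * s2^2)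
    + k111 * s1^3 + k112 * s1^2 * s2 + k122 * s1 * s2^2 + k222 * s2^3
    + l1111 * s1^4 + l1112 * s1^3 * s2 + l1122 * s1^2 * s2^2
    + l1222 * s1 * s2^3 + l2222 * s2^4
    + (k1 * s1 + k2 * s2) * h
    + (l11 * s1^2 + l12 * s1 * s2 + l22 * s2^2) * h

open Polynomial Finset

section PolynomialFunction

variable {R : Type*} [CommRing R] [IsDomain R] [Infinite R]

theorem forall_sum_mul_pow_eq_zero_iff {n : ℕ} {c : ℕ → R} :
    (∀ x, ∑ i ∈ range n, c i * x ^ i = 0) ↔ ∀ i < n, c i = 0 := by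
  refine ⟨fun h i hi => ?_, fun hc x => sum_eq_zero fun i hi => by simp [hc i (mem_range.1 hi)]⟩
  have hp : ∑ j ∈ range n, C (c j) * X ^ j = 0 :=
    zero_of_eval_zero _ fun x => by simpa [eval_finsetSum] using h x
  simpa [finsetSum_coeff, coeff_C_mul_X_pow, hi] using congrArg (coeff · i) hp

theorem forall_sum_sum_sum_mul_pow_eq_zero_iff {n₁ n₂ n₃ : ℕ} {c : ℕ → ℕ → ℕ → R} :
    (∀ x y z, ∑ i ∈ range n₁, ∑ j ∈ range n₂, ∑ k ∈ range n₃,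
      c i j k * x ^ i * y ^ j * z ^ k = 0) ↔
    ∀ i < n₁, ∀ j < n₂, ∀ k < n₃, c i j k = 0 := by
  refine ⟨fun h i hi j hj k hk => ?_, fun hc x y z => ?_⟩
  · have hyz (y z : R) : ∑ j ∈ range n₂, ∑ k ∈ range n₃, c i j k * y ^ j * z ^ k = 0 := by
      refine forall_sum_mul_pow_eq_zero_iff
        (c := fun i => ∑ j ∈ range n₂, ∑ k ∈ range n₃, c i j k * y ^ j * z ^ k)
        |>.1 (fun x => ?_) i hi
      rw [← h x y z]
      simp only [sum_mul]
      exact sum_congr rfl fun _ _ => sum_congr rfl fun _ _ => sum_congr rfl fun _ _ => by ring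
    have hz (z : R) : ∑ k ∈ range n₃, c i j k * z ^ k = 0 := by
      refine forall_sum_mul_pow_eq_zero_iff (c := fun j => ∑ k ∈ range n₃, c i j k * z ^ k)
        |>.1 (fun y => ?_) j hj
      rw [← hyz y z]
      simp only [sum_mul]
      exact sum_congr rfl fun _ _ => sum_congr rfl fun _ _ => by ring
    exact forall_sum_mul_pow_eq_zero_iff.1 hz k hk
  · refine sum_eq_zero fun i hi => sum_eq_zero fun j hj => sum_eq_zero fun k hk => ?_
    simp [hc i (mem_range.1 hi) j (mem_range.1 hj) k (mem_range.1 hk)]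

end PolynomialFunction

noncomputable def so2Generator (P : ℝ → ℝ → ℝ → ℝ) (s1 s2 h : ℝ) : ℝ :=
  s2 * deriv (fun x => P x s2 h) s1 - s1 * deriv (fun y => P s1 y h) s2

section SM2S

variable (a1 a2 m11 m12 m22 k111 k112 k122 k222
    l1111 l1112 l1122 l1222 l2222 k1 k2 l11 l12 l22 : ℝ)

theorem deriv_sm2sPot_fst (s1 s2 h : ℝ) :
    deriv (fun x => sm2sPot a1 a2 m11 m12 m22 k111 k112 k122 k222
      l1111 l1112 l1122 l1222 l2222 k1 k2 l11 l12 l22 x s2 h) s1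
      = a1 - (2 * m11 * s1 + m12 * s2)
        + 3 * k111 * s1 ^ 2 + 2 * k112 * s1 * s2 + k122 * s2 ^ 2
        + 4 * l1111 * s1 ^ 3 + 3 * l1112 * s1 ^ 2 * s2 + 2 * l1122 * s1 * s2 ^ 2 + l1222 * s2 ^ 3
        + k1 * h + (2 * l11 * s1 + l12 * s2) * h := by
  simp (disch := fun_prop) [sm2sPot]
  ring

theorem deriv_sm2sPot_snd (s1 s2 h : ℝ) :
    deriv (fun y => sm2sPot a1 a2 m11 m12 m22 k111 k112 k122 k222
      l1111 l1112 l1122 l1222 l2222 k1 k2 l11 l12 l22 s1 y h) s2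
      = a2 - (m12 * s1 + 2 * m22 * s2)
        + k112 * s1 ^ 2 + 2 * k122 * s1 * s2 + 3 * k222 * s2 ^ 2
        + l1112 * s1 ^ 3 + 2 * l1122 * s1 ^ 2 * s2 + 3 * l1222 * s1 * s2 ^ 2 + 4 * l2222 * s2 ^ 3
        + k2 * h + (l12 * s1 + 2 * l22 * s2) * h := by
  simp (disch := fun_prop) [sm2sPot]
  ring

def so2GeneratorCoeff : ℕ → ℕ → ℕ → ℝ
  | 1, 0, 0 => -a2
  | 0, 1, 0 => a1
  | 2, 0, 0 => m12
  | 1, 1, 0 => 2 * (m22 - m11)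
  | 0, 2, 0 => -m12
  | 3, 0, 0 => -k112
  | 2, 1, 0 => 3 * k111 - 2 * k122
  | 1, 2, 0 => 2 * k112 - 3 * k222
  | 0, 3, 0 => k122
  | 4, 0, 0 => -l1112
  | 3, 1, 0 => 4 * l1111 - 2 * l1122
  | 2, 2, 0 => 3 * (l1112 - l1222)
  | 1, 3, 0 => 2 * l1122 - 4 * l2222
  | 0, 4, 0 => l1222
  | 1, 0, 1 => -k2
  | 0, 1, 1 => k1
  | 2, 0, 1 => -l12
  | 1, 1, 1 => 2 * (l11 - l22)
  | 0, 2, 1 => l12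
  | _, _, _ => 0

theorem so2Generator_sm2sPot (s1 s2 h : ℝ) :
    so2Generator (sm2sPot a1 a2 m11 m12 m22 k111 k112 k122 k222
      l1111 l1112 l1122 l1222 l2222 k1 k2 l11 l12 l22) s1 s2 h
      = ∑ i ∈ range 5, ∑ j ∈ range 5, ∑ k ∈ range 2,
        so2GeneratorCoeff a1 a2 m11 m12 m22 k111 k112 k122 k222
          l1111 l1112 l1122 l1222 l2222 k1 k2 l11 l12 l22 i j k * s1 ^ i * s2 ^ j * h ^ k := by
  rw [so2Generator, deriv_sm2sPot_fst, deriv_sm2sPot_snd]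
  simp only [sum_range_succ, sum_range_zero, so2GeneratorCoeff]
  ring

theorem so2GeneratorCoeff_eq_zero_iff :
    (∀ i < 5, ∀ j < 5, ∀ k < 2, so2GeneratorCoeff a1 a2 m11 m12 m22 k111 k112 k122 k222
        l1111 l1112 l1122 l1222 l2222 k1 k2 l11 l12 l22 i j k = 0)
    ↔ (a1 = 0 ∧ a2 = 0 ∧ m12 = 0 ∧ m11 = m22 ∧
        k111 = 0 ∧ k112 = 0 ∧ k122 = 0 ∧ k222 = 0 ∧
        l1112 = 0 ∧ l1222 = 0 ∧ l1111 = l2222 ∧ l1122 = 2 * l2222 ∧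
        k1 = 0 ∧ k2 = 0 ∧ l12 = 0 ∧ l11 = l22) := by
  constructor
  · intro hc
    have e (i j k : ℕ) (hi : i < 5 := by norm_num) (hj : j < 5 := by norm_num)
        (hk : k < 2 := by norm_num) := hc i hi j hj k hk
    have := e 1 0 0; have := e 0 1 0; have := e 2 0 0; have := e 1 1 0
    have := e 3 0 0; have := e 2 1 0; have := e 1 2 0; have := e 0 3 0
    have := e 4 0 0; have := e 3 1 0; have := e 1 3 0; have := e 0 4 0
    have := e 1 0 1; have := e 0 1 1; have := e 2 0 1; have := e 1 1 1
    simp only [so2GeneratorCoeff] at *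
    refine ⟨?_, ?_, ?_, ?_, ?_, ?_, ?_, ?_, ?_, ?_, ?_, ?_, ?_, ?_, ?_, ?_⟩ <;> linarith
  · rintro ⟨rfl, rfl, rfl, rfl, rfl, rfl, rfl, rfl, rfl, rfl, rfl, rfl, rfl, rfl, rfl, rfl⟩
      i - j - k -
    unfold so2GeneratorCoeff
    split <;> ring

end SM2S

/-- The SM+2S potential is annihilated by the `SO(2)` generator
`s₂∂_{s₁} − s₁∂_{s₂}` acting on the two singlets if and only if its parameters
satisfy exactly the `SO(2)`-symmetric conditions of Leaf 1. -/
theorem stmt_12 (a1 a2 m11 m12 m22 k111 k112 k122 k222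
    l1111 l1112 l1122 l1222 l2222 k1 k2 l11 l12 l22 : ℝ) :
    (∀ s1 s2 h : ℝ,
      s2 * deriv (fun x => sm2sPot a1 a2 m11 m12 m22 k111 k112 k122 k222
            l1111 l1112 l1122 l1222 l2222 k1 k2 l11 l12 l22 x s2 h) s1
        - s1 * deriv (fun y => sm2sPot a1 a2 m11 m12 m22 k111 k112 k122 k222
            l1111 l1112 l1122 l1222 l2222 k1 k2 l11 l12 l22 s1 y h) s2 = 0)
    ↔ (a1 = 0 ∧ a2 = 0 ∧ m12 = 0 ∧ m11 = m22 ∧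
        k111 = 0 ∧ k112 = 0 ∧ k122 = 0 ∧ k222 = 0 ∧
        l1112 = 0 ∧ l1222 = 0 ∧ l1111 = l2222 ∧ l1122 = 2 * l2222 ∧
        k1 = 0 ∧ k2 = 0 ∧ l12 = 0 ∧ l11 = l22) := by
  change (∀ s1 s2 h, so2Generator _ s1 s2 h = 0) ↔ _
  simp only [so2Generator_sm2sPot]
  rw [forall_sum_sum_sum_mul_pow_eq_zero_iff, so2GeneratorCoeff_eq_zero_iff]
end
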